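/- Let an RBIBD(s, ℓ, 1) exist, and let four labels a, b, c, d be chosen independently and uniformly at random from an s-element set. The probability that the pairs {a,b} and {c,d} are 'compatible' — i.e., either all four labels are equal, or the set {a,b,c,d} has at least two distinct elements with a≠b, c≠d, and all elements of {a,b,c,d} lie in a common block of the design — equals (1 + (s-1)(ℓ² - ℓ))/s³. -/
import Mathlib


/-- An `RBIBD(s, ℓ, 1)`: a collection `P 1, …, P m` of partitions of an `s`-element
set into `ℓ`-element blocks such that every 2-element subset of the `s`-element set is
contained in exactly one of the blocks appearing in the partitions (counted with
multiplicity over the partitions). -/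
def IsRBIBD (s ℓ m : ℕ) (P : Fin m → Finset (Finset (Fin s))) : Prop :=
  (∀ i, ∀ B ∈ P i, B.card = ℓ) ∧
  (∀ i, ∀ x : Fin s, ∃! B, B ∈ P i ∧ x ∈ B) ∧
  (∀ x y : Fin s, x ≠ y →
    ∃! p : Fin m × Finset (Fin s), p.2 ∈ P p.1 ∧ x ∈ p.2 ∧ y ∈ p.2)

/-- Labels `a, b, c, d` are compatible with respect to the design: either all four
are equal, or `a ≠ b`, `c ≠ d` (so `{a,b,c,d}` has at least two distinct elements),
and all of `a, b, c, d` lie in a common block of the design. -/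
def Compatible {s m : ℕ} (P : Fin m → Finset (Finset (Fin s)))
    (a b c d : Fin s) : Prop :=
  (a = b ∧ b = c ∧ c = d) ∨
  (a ≠ b ∧ c ≠ d ∧ ∃ i, ∃ B ∈ P i, a ∈ B ∧ b ∈ B ∧ c ∈ B ∧ d ∈ B)

open Classical in
/-- For an RBIBD(s, ℓ, 1), the probability that four independent uniformly random
labels `a, b, c, d` from the `s`-element set are compatible equals
`(1 + (s-1)(ℓ² - ℓ))/s³`. -/
theorem rbibd_compatible_probability
    (s ℓ m : ℕ) (hℓ : 2 ≤ ℓ) (hs : ℓ ≤ s)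
    (P : Fin m → Finset (Finset (Fin s))) (hP : IsRBIBD s ℓ m P) :
    ((Finset.univ.filter
        (fun q : Fin s × Fin s × Fin s × Fin s =>
          Compatible P q.1 q.2.1 q.2.2.1 q.2.2.2)).card : ℝ) / (s : ℝ) ^ 4 =
      (1 + ((s : ℝ) - 1) * ((ℓ : ℝ) ^ 2 - (ℓ : ℝ))) / (s : ℝ) ^ 3 := by
  obtain ⟨hcard, hpart, hpair⟩ := hP
  have hs1 : 1 ≤ s := le_trans (by omega) hs
  have key : (Finset.univ.filter
        (fun q : Fin s × Fin s × Fin s × Fin s =>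
          Compatible P q.1 q.2.1 q.2.2.1 q.2.2.2)).card
      = s + s * ((s - 1) * (ℓ * (ℓ - 1))) := by
    rw [Finset.card_filter]
    simp only [Fintype.sum_prod_type]
    have split : ∀ a b c d : Fin s, (if Compatible P a b c d then (1:ℕ) else 0) =
        (if a = b ∧ b = c ∧ c = d then 1 else 0) +
        (if a ≠ b ∧ c ≠ d ∧ ∃ i, ∃ B ∈ P i, a ∈ B ∧ b ∈ B ∧ c ∈ B ∧ d ∈ B then 1 else 0) := by
      intro a b c d
      unfold Compatible
      by_cases h1 : a = b ∧ b = c ∧ c = d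
      · have h2 : ¬ (a ≠ b ∧ c ≠ d ∧ ∃ i, ∃ B ∈ P i, a ∈ B ∧ b ∈ B ∧ c ∈ B ∧ d ∈ B) :=
          fun h => h.1 h1.1
        simp [h1, h2]
      · by_cases h2 : a ≠ b ∧ c ≠ d ∧ ∃ i, ∃ B ∈ P i, a ∈ B ∧ b ∈ B ∧ c ∈ B ∧ d ∈ B
        · simp [h1, h2]
        · simp [h1, h2]
    simp only [split, Finset.sum_add_distrib]
    congr 1
    · -- first part equals s
      have e1 : ∀ a b c : Fin s, (∑ d : Fin s, if a = b ∧ b = c ∧ c = d then (1:ℕ) else 0)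
          = if a = b ∧ b = c then 1 else 0 := by
        intro a b c
        by_cases h : a = b ∧ b = c
        · simp [h.1, h.2]
        · simp [← and_assoc, h]
      have e2 : ∀ a b : Fin s, (∑ c : Fin s, if a = b ∧ b = c then (1:ℕ) else 0)
          = if a = b then 1 else 0 := by
        intro a b
        by_cases h : a = b
        · simp [h]
        · simp [h]
      simp only [e1, e2]
      simp
    · -- second part equals s * ((s-1) * (ℓ * (ℓ-1)))
      have e2 : ∀ a b : Fin s, (∑ c : Fin s, ∑ d : Fin s,
          if a ≠ b ∧ c ≠ d ∧ ∃ i, ∃ B ∈ P i, a ∈ B ∧ b ∈ B ∧ c ∈ B ∧ d ∈ B then (1:ℕ) else 0)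
          = if a ≠ b then ℓ * (ℓ - 1) else 0 := by
        intro a b
        by_cases hab : a = b
        · simp [hab]
        · rw [if_pos hab]
          obtain ⟨⟨i, B⟩, ⟨hBi, haB, hbB⟩, huniq⟩ := hpair a b hab
          have hBcard : B.card = ℓ := hcard i B hBi
          have hiff : ∀ c d : Fin s,
              (a ≠ b ∧ c ≠ d ∧ ∃ j, ∃ B' ∈ P j, a ∈ B' ∧ b ∈ B' ∧ c ∈ B' ∧ d ∈ B')
              ↔ (c ∈ B ∧ d ∈ B.erase c) := by
            intro c d
            constructor
            · rintro ⟨-, hcd, j, B', hB', ha', hb', hc', hd'⟩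
              have heq := huniq (j, B') ⟨hB', ha', hb'⟩
              have hBB : B' = B := congrArg Prod.snd heq
              subst hBB
              exact ⟨hc', Finset.mem_erase.mpr ⟨fun h => hcd h.symm, hd'⟩⟩
            · rintro ⟨hc, hd⟩
              obtain ⟨hdc, hdB⟩ := Finset.mem_erase.mp hd
              exact ⟨hab, fun h => hdc h.symm, i, B, hBi, haB, hbB, hc, hdB⟩
          calc (∑ c : Fin s, ∑ d : Fin s,
              if a ≠ b ∧ c ≠ d ∧ ∃ i, ∃ B ∈ P i, a ∈ B ∧ b ∈ B ∧ c ∈ B ∧ d ∈ B then (1:ℕ) else 0)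
              = ∑ c : Fin s, ∑ d : Fin s, (if c ∈ B ∧ d ∈ B.erase c then (1:ℕ) else 0) := by
                refine Finset.sum_congr rfl fun c _ => Finset.sum_congr rfl fun d _ => ?_
                exact if_congr (hiff c d) rfl rfl
            _ = ∑ c : Fin s, (if c ∈ B then ℓ - 1 else 0) := by
                refine Finset.sum_congr rfl fun c _ => ?_
                by_cases hc : c ∈ B
                · simp only [hc, true_and]
                  rw [Finset.sum_ite_mem, Finset.univ_inter, Finset.sum_const,
                    Finset.card_erase_of_mem hc, hBcard, smul_eq_mul, mul_one, if_true]
                · simp [hc]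
            _ = ℓ * (ℓ - 1) := by
                simp [Finset.sum_ite_mem, hBcard, mul_comm]
      simp only [e2]
      have e3 : ∀ a : Fin s, (∑ b : Fin s, if a ≠ b then ℓ * (ℓ - 1) else 0)
          = (s - 1) * (ℓ * (ℓ - 1)) := by
        intro a
        rw [← Finset.sum_filter, Finset.filter_ne, Finset.sum_const,
          Finset.card_erase_of_mem (Finset.mem_univ a), Finset.card_univ,
          Fintype.card_fin, smul_eq_mul]
      simp only [e3]
      simp [mul_comm]
  rw [key]
  have hs0 : (0:ℝ) < (s:ℝ) := by exact_mod_cast (by omega : 0 < s)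
  rw [div_eq_div_iff (by positivity) (by positivity)]
  push_cast [Nat.cast_sub hs1, Nat.cast_sub (show 1 ≤ ℓ by omega)]
  ring
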